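/- Let P be a partial order on Y. Assume that for every μ ∈ Y and all t₁, t₂ ∈ T1(S) with t₁(μ) ≠ μ and t₂(μ) ≠ μ one has t₁(μ) − t₂(μ) ∈ DIS(μ,P,S). If furthermore P satisfies the topological descending chain condition and T(S) is equicontinuous and every element of T(S) is compatible with P, then Red(S) = M̄. -/

import Mathlib

/-!
Persistence and `ε`-uniqueness are proved by one and the same induction. Fix `ε` and let `δ` be
the neighbourhood of `0` that equicontinuity attaches to it. The elements having the property form
an `R`-stable subgroup containing `δ`; an open subgroup is closed, so it contains `Cspan R Z` as
soon as it contains `Z`, and by the descending chain condition (a descending chain in `Y` ends up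
in `δ`) it is enough to show that `μ ∈ Y` has the property once all of `DSM μ` has it.

For persistence this is immediate from compatibility. For uniqueness, a reduction of `μ` either
leaves `μ` stuck or passes through some `s μ ∈ DSM μ` with `s ∈ T1`, and two reductions through
`s₁ μ` and `s₂ μ` are compared using `s₁ μ - s₂ μ ∈ DIS μ`: each generator `ν - s ν` of `DIS μ`
reduces only into `ε` because `ν` is already uniquely reducible, hence so does all of `DIS μ`.
-/

open Set Filter Topology Pointwise

/-- The set of all finite compositions of elements of `T1`, including the identity. -/
def TS {M : Type*} [AddCommGroup M] (T1 : Set (AddMonoid.End M)) : Set (AddMonoid.End M) :=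
  ↑(Submonoid.closure T1)

/-- Smallest topologically closed additive subgroup containing `Z` and stable under `R`. -/
def Cspan {M : Type*} [AddCommGroup M] [TopologicalSpace M]
    (R : Set (AddMonoid.End M)) (Z : Set M) : Set M :=
  ⋂₀ {N : Set M | Z ⊆ N ∧ IsClosed N ∧ (∃ H : AddSubgroup M, N = ↑H) ∧
      ∀ r ∈ R, ∀ a ∈ N, r a ∈ N}

def IrrS {M : Type*} [AddCommGroup M] (T1 : Set (AddMonoid.End M)) : Set M :=
  {a | ∀ t ∈ TS T1, t a = a}

def IS {M : Type*} [AddCommGroup M] [TopologicalSpace M]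
    (T1 : Set (AddMonoid.End M)) : Set M :=
  closure (AddSubgroup.closure {x : M | ∃ a : M, ∃ t ∈ TS T1, x = a - t a} : Set M)

def Stuck {M : Type*} [AddCommGroup M] (T1 : Set (AddMonoid.End M)) (N : Set M) (a : M) :
    Prop :=
  ∀ t ∈ TS T1, t a ∈ N

def PerE {M : Type*} [AddCommGroup M] (T1 : Set (AddMonoid.End M)) (ε : Set M) : Set M :=
  {a | ∀ t1 ∈ TS T1, ∃ t2 ∈ TS T1, ∃ b ∈ IrrS T1,
    Stuck T1 {x | x - b ∈ ε} (t2 (t1 a))}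

def Per {M : Type*} [AddCommGroup M] (T1 : Set (AddMonoid.End M))
    (B : ℕ → AddSubgroup M) : Set M :=
  ⋂ n, PerE T1 (B n)

def UniqE {M : Type*} [AddCommGroup M] (T1 : Set (AddMonoid.End M)) (ε : Set M) : Set M :=
  {a | ∀ t1 ∈ TS T1, ∀ t2 ∈ TS T1, ∀ b1 ∈ IrrS T1, ∀ b2 ∈ IrrS T1,
    Stuck T1 {x | x - b1 ∈ ε} (t1 a) → Stuck T1 {x | x - b2 ∈ ε} (t2 a) → b1 - b2 ∈ ε}

def RedE {M : Type*} [AddCommGroup M] (T1 : Set (AddMonoid.End M))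
    (B : ℕ → AddSubgroup M) (ε : Set M) : Set M :=
  Per T1 B ∩ UniqE T1 ε

def Red {M : Type*} [AddCommGroup M] (T1 : Set (AddMonoid.End M))
    (B : ℕ → AddSubgroup M) : Set M :=
  ⋂ n, RedE T1 B (B n)

def Equicont {M : Type*} [AddCommGroup M] (T1 : Set (AddMonoid.End M))
    (B : ℕ → AddSubgroup M) : Prop :=
  ∀ n : ℕ, ∃ m : ℕ, ∀ t ∈ TS T1, ∀ a ∈ B m, t a ∈ B n

def DSM {M : Type*} [AddCommGroup M] [TopologicalSpace M]
    (R : Set (AddMonoid.End M)) (Y : Set M) (P : M → M → Prop) (μ : M) : Set M :=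
  Cspan R {ν | ν ∈ Y ∧ P ν μ}

def Compatible {M : Type*} [AddCommGroup M] [TopologicalSpace M]
    (R : Set (AddMonoid.End M)) (Y : Set M) (P : M → M → Prop)
    (t : AddMonoid.End M) : Prop :=
  ∀ μ ∈ Y, t μ = μ ∨ t μ ∈ DSM R Y P μ

def DIS {M : Type*} [AddCommGroup M] [TopologicalSpace M]
    (R : Set (AddMonoid.End M)) (Y : Set M) (P : M → M → Prop)
    (T1 : Set (AddMonoid.End M)) (μ : M) : Set M :=
  Cspan R {x | ∃ ν ∈ Y, P ν μ ∧ ∃ t ∈ T1, x = ν - t ν}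

def TDCC {M : Type*} [AddCommGroup M] [TopologicalSpace M]
    (Y : Set M) (P : M → M → Prop) : Prop :=
  ∀ μ : ℕ → M, (∀ n, μ n ∈ Y) → (∀ n, P (μ (n + 1)) (μ n)) →
    Filter.Tendsto μ Filter.atTop (nhds 0)

section

variable {M : Type*} [AddCommGroup M] {R T1 : Set (AddMonoid.End M)} {ε : AddSubgroup M}
  {δ : Set M} {a b b' c μ x y : M} {r t u : AddMonoid.End M}

lemma one_mem_TS : (1 : AddMonoid.End M) ∈ TS T1 := Submonoid.one_mem _

lemma mul_mem_TS (hu : u ∈ TS T1) (ht : t ∈ TS T1) : u * t ∈ TS T1 :=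
  Submonoid.mul_mem _ hu ht

lemma subset_TS : T1 ⊆ TS T1 := Submonoid.subset_closure

lemma apply_comm_of_mem_TS (hT1comm : ∀ t ∈ T1, ∀ r ∈ R, ∀ a : M, t (r a) = r (t a))
    (ht : t ∈ TS T1) (hr : r ∈ R) (a : M) : t (r a) = r (t a) := by
  have hle : Submonoid.closure T1 ≤ Submonoid.centralizer R :=
    Submonoid.closure_le.2 fun s hs => Submonoid.mem_centralizer_iff.2 fun r hr =>
      AddMonoidHom.ext fun a => (hT1comm s hs r hr a).symm
  exact (DFunLike.congr_fun (Submonoid.mem_centralizer_iff.1 (hle ht) r hr) a).symm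

lemma apply_eq_or_exists_of_mem_TS (ht : t ∈ TS T1) (μ : M) :
    t μ = μ ∨ ∃ s ∈ T1, s μ ≠ μ ∧ ∃ t' ∈ TS T1, t μ = t' (s μ) := by
  induction ht using Submonoid.closure_induction_right with
  | one => exact Or.inl rfl
  | mul_right t' ht' s hs ih =>
    by_cases hsμ : s μ = μ
    · simpa only [AddMonoid.End.coe_mul, Function.comp_apply, hsμ] using ih
    · exact Or.inr ⟨s, hs, hsμ, t', ht', rfl⟩

lemma zero_mem_IrrS : (0 : M) ∈ IrrS T1 := fun t _ => map_zero t

lemma add_mem_IrrS (ha : a ∈ IrrS T1) (hb : b ∈ IrrS T1) : a + b ∈ IrrS T1 :=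
  fun t ht => by rw [map_add, ha t ht, hb t ht]

lemma neg_mem_IrrS (ha : a ∈ IrrS T1) : -a ∈ IrrS T1 :=
  fun t ht => by rw [map_neg, ha t ht]

lemma map_mem_IrrS (hT1comm : ∀ t ∈ T1, ∀ r ∈ R, ∀ a : M, t (r a) = r (t a))
    (hr : r ∈ R) (ha : a ∈ IrrS T1) : r a ∈ IrrS T1 :=
  fun t ht => by rw [apply_comm_of_mem_TS hT1comm ht hr, ha t ht]

variable (T1) in
/-- `Stuck T1 (b + ε) a`, for a subgroup `ε`. -/
def StuckMod (ε : AddSubgroup M) (b a : M) : Prop :=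
  ∀ t ∈ TS T1, t a - b ∈ ε

variable (T1) in
def ReducesMod (ε : AddSubgroup M) (a b : M) : Prop :=
  b ∈ IrrS T1 ∧ ∃ t ∈ TS T1, StuckMod T1 ε b (t a)

namespace StuckMod

lemma apply (h : StuckMod T1 ε b a) (hu : u ∈ TS T1) : StuckMod T1 ε b (u a) :=
  fun t ht => h (t * u) (mul_mem_TS ht hu)

lemma sub_mem (h : StuckMod T1 ε b a) (h' : StuckMod T1 ε b' a) : b - b' ∈ ε := by
  simpa only [sub_sub_sub_cancel_left] using ε.sub_mem (h' 1 one_mem_TS) (h 1 one_mem_TS)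

lemma add (h : StuckMod T1 ε b a) (h' : StuckMod T1 ε b' x) :
    StuckMod T1 ε (b + b') (a + x) :=
  fun t ht => by simpa only [map_add, add_sub_add_comm] using ε.add_mem (h t ht) (h' t ht)

lemma neg (h : StuckMod T1 ε b a) : StuckMod T1 ε (-b) (-a) :=
  fun t ht => by simpa only [map_neg, neg_sub_neg, neg_sub] using ε.neg_mem (h t ht)

lemma map (hT1comm : ∀ t ∈ T1, ∀ r ∈ R, ∀ a : M, t (r a) = r (t a))
    (hRε : ∀ r ∈ R, ∀ x ∈ ε, r x ∈ ε) (hr : r ∈ R) (h : StuckMod T1 ε b a) :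
    StuckMod T1 ε (r b) (r a) :=
  fun t ht => by simpa only [apply_comm_of_mem_TS hT1comm ht hr, map_sub] using hRε r hr _ (h t ht)

end StuckMod

lemma stuckMod_self (ha : a ∈ IrrS T1) : StuckMod T1 ε a a :=
  fun t ht => by rw [ha t ht, sub_self]; exact ε.zero_mem

lemma stuckMod_zero_of_mem (hδε : ∀ t ∈ TS T1, ∀ x ∈ δ, t x ∈ ε) (ha : a ∈ δ) :
    StuckMod T1 ε 0 a :=
  fun t ht => by simpa only [sub_zero] using hδε t ht a ha

namespace ReducesMod

lemma of_apply (h : ReducesMod T1 ε (u a) b) (hu : u ∈ TS T1) : ReducesMod T1 ε a b :=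
  let ⟨hb, t, ht, hst⟩ := h
  ⟨hb, t * u, mul_mem_TS ht hu, hst⟩

lemma neg (h : ReducesMod T1 ε a b) : ReducesMod T1 ε (-a) (-b) := by
  obtain ⟨hb, t, ht, hst⟩ := h
  refine ⟨neg_mem_IrrS hb, t, ht, ?_⟩
  rw [map_neg]
  exact hst.neg

lemma stuckMod_or_exists (h : ReducesMod T1 ε μ b) :
    StuckMod T1 ε b μ ∨ ∃ s ∈ T1, s μ ≠ μ ∧ ReducesMod T1 ε (s μ) b := by
  obtain ⟨hb, t, ht, hst⟩ := h
  rcases apply_eq_or_exists_of_mem_TS ht μ with htμ | ⟨s, hs, hsμ, t', ht', htμ⟩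
  · exact Or.inl (htμ ▸ hst)
  · exact Or.inr ⟨s, hs, hsμ, hb, t', ht', htμ ▸ hst⟩

end ReducesMod

lemma reducesMod_neg_iff : ReducesMod T1 ε (-a) b ↔ ReducesMod T1 ε a (-b) :=
  ⟨fun h => by simpa only [neg_neg] using h.neg, fun h => by simpa only [neg_neg] using h.neg⟩

lemma StuckMod.sub_mem_of_reducesMod (h : StuckMod T1 ε c a) (h' : ReducesMod T1 ε a b) :
    c - b ∈ ε :=
  let ⟨_, _, ht, hst⟩ := h'
  (h.apply ht).sub_mem hst

lemma mem_PerE_iff :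
    a ∈ PerE T1 (ε : Set M) ↔ ∀ t ∈ TS T1, ∃ b, ReducesMod T1 ε (t a) b :=
  forall₂_congr fun _ _ =>
    ⟨fun ⟨u, hu, b, hb, hst⟩ => ⟨b, hb, u, hu, hst⟩, fun ⟨b, hb, u, hu, hst⟩ => ⟨u, hu, b, hb, hst⟩⟩

lemma mem_UniqE_iff : a ∈ UniqE T1 (ε : Set M) ↔
    ∀ b₁ b₂, ReducesMod T1 ε a b₁ → ReducesMod T1 ε a b₂ → b₁ - b₂ ∈ ε :=
  ⟨fun h b₁ b₂ ⟨hb₁, t₁, ht₁, h₁⟩ ⟨hb₂, t₂, ht₂, h₂⟩ => h t₁ ht₁ t₂ ht₂ b₁ hb₁ b₂ hb₂ h₁ h₂,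
    fun h _ ht₁ _ ht₂ b₁ hb₁ b₂ hb₂ h₁ h₂ => h b₁ b₂ ⟨hb₁, _, ht₁, h₁⟩ ⟨hb₂, _, ht₂, h₂⟩⟩

namespace PerE

lemma exists_reducesMod (hx : x ∈ PerE T1 (ε : Set M)) : ∃ b, ReducesMod T1 ε x b :=
  mem_PerE_iff.1 hx 1 one_mem_TS

lemma exists_stuckMod_add (hx : x ∈ PerE T1 (ε : Set M)) (hy : y ∈ PerE T1 (ε : Set M))
    (ht : t ∈ TS T1) : ∃ c c', ReducesMod T1 ε (t x) c ∧ ReducesMod T1 ε (t y) c' ∧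
      ∃ u ∈ TS T1, StuckMod T1 ε (c + c') (u (t (x + y))) := by
  obtain ⟨u, hu, c, hc, hxc⟩ := hx t ht
  obtain ⟨u', hu', c', hc', hyc'⟩ := hy (u * t) (mul_mem_TS hu ht)
  have hu'u := mul_mem_TS hu' hu
  refine ⟨c, c', ⟨hc, u, hu, hxc⟩, ⟨hc', u' * u, hu'u, hyc'⟩, u' * u, hu'u, ?_⟩
  rw [map_add, map_add]
  exact (StuckMod.apply hxc hu').add hyc'

lemma add_mem (hx : x ∈ PerE T1 (ε : Set M)) (hy : y ∈ PerE T1 (ε : Set M)) :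
    x + y ∈ PerE T1 (ε : Set M) :=
  mem_PerE_iff.2 fun _ ht =>
    let ⟨_, _, hc, hc', u, hu, hst⟩ := exists_stuckMod_add hx hy ht
    ⟨_, add_mem_IrrS hc.1 hc'.1, u, hu, hst⟩

lemma neg_mem (hx : x ∈ PerE T1 (ε : Set M)) : -x ∈ PerE T1 (ε : Set M) :=
  mem_PerE_iff.2 fun t ht => by
    obtain ⟨b, hb⟩ := mem_PerE_iff.1 hx t ht
    exact ⟨-b, by simpa only [map_neg] using hb.neg⟩

lemma map_mem (hT1comm : ∀ t ∈ T1, ∀ r ∈ R, ∀ a : M, t (r a) = r (t a))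
    (hRε : ∀ r ∈ R, ∀ x ∈ ε, r x ∈ ε) (hr : r ∈ R) (hx : x ∈ PerE T1 (ε : Set M)) :
    r x ∈ PerE T1 (ε : Set M) := fun t ht => by
  obtain ⟨u, hu, b, hb, hst⟩ := hx t ht
  refine ⟨u, hu, r b, map_mem_IrrS hT1comm hr hb, ?_⟩
  rw [apply_comm_of_mem_TS hT1comm ht hr, apply_comm_of_mem_TS hT1comm hu hr]
  exact StuckMod.map hT1comm hRε hr hst

lemma of_mem (hδε : ∀ t ∈ TS T1, ∀ x ∈ δ, t x ∈ ε) (ha : a ∈ δ) : a ∈ PerE T1 (ε : Set M) :=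
  fun _ ht => ⟨1, one_mem_TS, 0, zero_mem_IrrS, (stuckMod_zero_of_mem hδε ha).apply ht⟩

end PerE

namespace ReducesMod

lemma exists_add (hx : x ∈ PerE T1 (ε : Set M)) (hy : y ∈ PerE T1 (ε : Set M))
    (h : ReducesMod T1 ε (x + y) b) :
    ∃ c c', ReducesMod T1 ε x c ∧ ReducesMod T1 ε y c' ∧ b - (c + c') ∈ ε := by
  obtain ⟨-, t, ht, hst⟩ := h
  obtain ⟨c, c', hc, hc', u, hu, hst'⟩ := PerE.exists_stuckMod_add hx hy ht
  exact ⟨c, c', hc.of_apply ht, hc'.of_apply ht, (hst.apply hu).sub_mem hst'⟩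

lemma exists_map (hT1comm : ∀ t ∈ T1, ∀ r ∈ R, ∀ a : M, t (r a) = r (t a))
    (hRε : ∀ r ∈ R, ∀ x ∈ ε, r x ∈ ε) (hr : r ∈ R) (hx : x ∈ PerE T1 (ε : Set M))
    (h : ReducesMod T1 ε (r x) b) : ∃ c, ReducesMod T1 ε x c ∧ b - r c ∈ ε := by
  obtain ⟨-, t, ht, hst⟩ := h
  obtain ⟨u, hu, c, hc, hst'⟩ := hx t ht
  refine ⟨c, ⟨hc, u * t, mul_mem_TS hu ht, hst'⟩, (hst.apply hu).sub_mem ?_⟩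
  rw [apply_comm_of_mem_TS hT1comm ht hr, apply_comm_of_mem_TS hT1comm hu hr]
  exact StuckMod.map hT1comm hRε hr hst'

end ReducesMod

variable (T1) in
/-- The elements that are `ε`-uniquely reducible to `0`. -/
def UniqZeroE (ε : AddSubgroup M) : Set M :=
  {a | ∀ b, ReducesMod T1 ε a b → b ∈ ε}

namespace UniqZeroE

lemma subset_UniqE : UniqZeroE T1 ε ⊆ UniqE T1 (ε : Set M) :=
  fun _ ha => mem_UniqE_iff.2 fun b₁ b₂ h₁ h₂ => ε.sub_mem (ha b₁ h₁) (ha b₂ h₂)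

lemma of_mem (hδε : ∀ t ∈ TS T1, ∀ x ∈ δ, t x ∈ ε) (ha : a ∈ δ) : a ∈ UniqZeroE T1 ε :=
  fun b hb => by
    simpa only [zero_sub, neg_mem_iff] using (stuckMod_zero_of_mem hδε ha).sub_mem_of_reducesMod hb

lemma neg_mem (hx : x ∈ UniqZeroE T1 ε) : -x ∈ UniqZeroE T1 ε :=
  fun _ hb => neg_mem_iff.1 (hx _ (reducesMod_neg_iff.1 hb))

lemma add_mem (hper : ∀ a, a ∈ PerE T1 (ε : Set M)) (hx : x ∈ UniqZeroE T1 ε)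
    (hy : y ∈ UniqZeroE T1 ε) : x + y ∈ UniqZeroE T1 ε := fun b hb => by
  obtain ⟨c, c', hc, hc', hb⟩ := hb.exists_add (hper x) (hper y)
  simpa only [sub_add_cancel] using ε.add_mem hb (ε.add_mem (hx c hc) (hy c' hc'))

lemma map_mem (hper : ∀ a, a ∈ PerE T1 (ε : Set M))
    (hT1comm : ∀ t ∈ T1, ∀ r ∈ R, ∀ a : M, t (r a) = r (t a))
    (hRε : ∀ r ∈ R, ∀ x ∈ ε, r x ∈ ε) (hr : r ∈ R) (hx : x ∈ UniqZeroE T1 ε) :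
    r x ∈ UniqZeroE T1 ε := fun b hb => by
  obtain ⟨c, hc, hb⟩ := hb.exists_map hT1comm hRε hr (hper x)
  simpa only [sub_add_cancel] using ε.add_mem hb (hRε r hr c (hx c hc))

end UniqZeroE

namespace UniqE

lemma neg_mem (hx : x ∈ UniqE T1 (ε : Set M)) : -x ∈ UniqE T1 (ε : Set M) :=
  mem_UniqE_iff.2 fun _ _ h₁ h₂ => by
    simpa only [neg_sub_neg] using
      mem_UniqE_iff.1 hx _ _ (reducesMod_neg_iff.1 h₂) (reducesMod_neg_iff.1 h₁)

lemma add_mem (hper : ∀ a, a ∈ PerE T1 (ε : Set M)) (hx : x ∈ UniqE T1 (ε : Set M))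
    (hy : y ∈ UniqE T1 (ε : Set M)) : x + y ∈ UniqE T1 (ε : Set M) :=
  mem_UniqE_iff.2 fun b₁ b₂ h₁ h₂ => by
    obtain ⟨c₁, c₁', hc₁, hc₁', e₁⟩ := h₁.exists_add (hper x) (hper y)
    obtain ⟨c₂, c₂', hc₂, hc₂', e₂⟩ := h₂.exists_add (hper x) (hper y)
    have hc := mem_UniqE_iff.1 hx c₁ c₂ hc₁ hc₂
    have hc' := mem_UniqE_iff.1 hy c₁' c₂' hc₁' hc₂'
    have hsplit : b₁ - b₂ = (b₁ - (c₁ + c₁')) - (b₂ - (c₂ + c₂')) + ((c₁ - c₂) + (c₁' - c₂')) := by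
      abel
    rw [hsplit]
    exact ε.add_mem (ε.sub_mem e₁ e₂) (ε.add_mem hc hc')

lemma map_mem (hper : ∀ a, a ∈ PerE T1 (ε : Set M))
    (hT1comm : ∀ t ∈ T1, ∀ r ∈ R, ∀ a : M, t (r a) = r (t a))
    (hRε : ∀ r ∈ R, ∀ x ∈ ε, r x ∈ ε) (hr : r ∈ R) (hx : x ∈ UniqE T1 (ε : Set M)) :
    r x ∈ UniqE T1 (ε : Set M) :=
  mem_UniqE_iff.2 fun b₁ b₂ h₁ h₂ => by
    obtain ⟨c₁, hc₁, e₁⟩ := h₁.exists_map hT1comm hRε hr (hper x)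
    obtain ⟨c₂, hc₂, e₂⟩ := h₂.exists_map hT1comm hRε hr (hper x)
    have hc : r (c₁ - c₂) ∈ ε := hRε r hr _ (mem_UniqE_iff.1 hx c₁ c₂ hc₁ hc₂)
    have hsplit : b₁ - b₂ = (b₁ - r c₁) - (b₂ - r c₂) + r (c₁ - c₂) := by
      rw [map_sub]
      abel
    rw [hsplit]
    exact ε.add_mem (ε.sub_mem e₁ e₂) hc

lemma sub_apply_mem_UniqZeroE (hper : ∀ a, a ∈ PerE T1 (ε : Set M))
    (ha : a ∈ UniqE T1 (ε : Set M)) (ht : t ∈ TS T1) : a - t a ∈ UniqZeroE T1 ε := fun b hb => by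
  rw [sub_eq_add_neg] at hb
  obtain ⟨c, c', hc, hc', hb⟩ := hb.exists_add (hper _) (hper _)
  have hcc' := mem_UniqE_iff.1 ha c (-c') hc ((reducesMod_neg_iff.1 hc').of_apply ht)
  rw [sub_neg_eq_add] at hcc'
  simpa only [sub_add_cancel] using ε.add_mem hb hcc'

end UniqE

lemma exists_sub_mem_of_sub_mem_UniqZeroE (hper : ∀ a, a ∈ PerE T1 (ε : Set M))
    (h : x - y ∈ UniqZeroE T1 ε) :
    ∃ c c', ReducesMod T1 ε x c ∧ ReducesMod T1 ε y c' ∧ c - c' ∈ ε := by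
  obtain ⟨b, hb⟩ := PerE.exists_reducesMod (hper (x - y))
  have hb0 := h b hb
  rw [sub_eq_add_neg] at hb
  obtain ⟨c, c', hc, hc', hb⟩ := hb.exists_add (hper _) (hper _)
  refine ⟨c, -c', hc, reducesMod_neg_iff.1 hc', ?_⟩
  rw [sub_neg_eq_add, ← sub_sub_cancel b (c + c')]
  exact ε.sub_mem hb0 hb

variable [TopologicalSpace M] {Y Z S : Set M} {P : M → M → Prop}

structure IsOpenRSubgroup (R : Set (AddMonoid.End M)) (S : Set M) : Prop where
  mem_nhds : S ∈ 𝓝 0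
  add_mem : ∀ a ∈ S, ∀ b ∈ S, a + b ∈ S
  neg_mem : ∀ a ∈ S, -a ∈ S
  map_mem : ∀ r ∈ R, ∀ a ∈ S, r a ∈ S

lemma subset_Cspan : Z ⊆ Cspan R Z := Set.subset_sInter fun _ hN => hN.1

lemma IsOpenRSubgroup.Cspan_subset [SeparatelyContinuousAdd M] (hS : IsOpenRSubgroup R S)
    (hZ : Z ⊆ S) : Cspan R Z ⊆ S := by
  let H : AddSubgroup M :=
    { carrier := S, add_mem' := fun ha hb => hS.add_mem _ ha _ hb,
      zero_mem' := mem_of_mem_nhds hS.mem_nhds, neg_mem' := fun ha => hS.neg_mem _ ha }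
  have hH : IsClosed (H : Set M) := H.isClosed_of_isOpen (H.isOpen_of_mem_nhds hS.mem_nhds)
  exact Set.sInter_subset_of_mem ⟨hZ, hH, ⟨H, rfl⟩, hS.map_mem⟩

lemma TDCC.subset_of_mem_nhds (hTDCC : TDCC Y P) (hS : S ∈ 𝓝 0)
    (hind : ∀ μ ∈ Y, (∀ ν ∈ Y, P ν μ → ν ∈ S) → μ ∈ S) : Y ⊆ S := by
  have hwf : WellFounded fun a b : {a // a ∈ Y ∧ a ∉ S} => P a b := by
    refine wellFounded_iff_isEmpty_descending_chain.2 ⟨fun ⟨f, hf⟩ => ?_⟩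
    obtain ⟨n, hn⟩ := ((hTDCC (fun n => f n) (fun n => (f n).2.1) hf).eventually hS).exists
    exact (f n).2.2 hn
  intro μ hμ
  by_contra hμS
  exact hwf.induction (C := fun _ => False) ⟨μ, hμ, hμS⟩ fun x ih =>
    x.2.2 (hind x x.2.1 fun ν hν hνx => by_contra fun hνS => ih ⟨ν, hν, hνS⟩ hνx)

theorem IsOpenRSubgroup.eq_univ [SeparatelyContinuousAdd M] (hS : IsOpenRSubgroup R S)
    (hYspan : Cspan R Y = univ) (hTDCC : TDCC Y P)
    (hstep : ∀ μ ∈ Y, DSM R Y P μ ⊆ S → μ ∈ S) : S = univ :=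
  univ_subset_iff.1 <| hYspan ▸ hS.Cspan_subset <| hTDCC.subset_of_mem_nhds hS.mem_nhds
    fun μ hμ ih => hstep μ hμ <| hS.Cspan_subset fun ν hν => ih ν hν.1 hν.2

lemma isOpenRSubgroup_PerE (hT1comm : ∀ t ∈ T1, ∀ r ∈ R, ∀ a : M, t (r a) = r (t a))
    (hRε : ∀ r ∈ R, ∀ x ∈ ε, r x ∈ ε) (hδ : δ ∈ 𝓝 0) (hδε : ∀ t ∈ TS T1, ∀ x ∈ δ, t x ∈ ε) :
    IsOpenRSubgroup R (PerE T1 (ε : Set M)) where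
  mem_nhds := mem_of_superset hδ fun _ => PerE.of_mem hδε
  add_mem _ hx _ hy := PerE.add_mem hx hy
  neg_mem _ hx := PerE.neg_mem hx
  map_mem _ hr _ hx := PerE.map_mem hT1comm hRε hr hx

lemma PerE.mem_of_DSM_subset (hcompat : ∀ t ∈ TS T1, Compatible R Y P t) (hμ : μ ∈ Y)
    (hD : DSM R Y P μ ⊆ PerE T1 (ε : Set M)) : μ ∈ PerE T1 (ε : Set M) := by
  refine mem_PerE_iff.2 fun t ht => ?_
  rcases hcompat t ht μ hμ with htμ | htμ
  · rw [htμ]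
    by_cases hirr : μ ∈ IrrS T1
    · exact ⟨μ, hirr, 1, one_mem_TS, stuckMod_self hirr⟩
    · obtain ⟨s, hs, hsμ⟩ : ∃ s ∈ TS T1, s μ ≠ μ := by simpa [IrrS] using hirr
      obtain ⟨b, hb⟩ := PerE.exists_reducesMod (hD ((hcompat s hs μ hμ).resolve_left hsμ))
      exact ⟨b, hb.of_apply hs⟩
  · exact PerE.exists_reducesMod (hD htμ)

theorem PerE_eq_univ [SeparatelyContinuousAdd M]
    (hT1comm : ∀ t ∈ T1, ∀ r ∈ R, ∀ a : M, t (r a) = r (t a))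
    (hRε : ∀ r ∈ R, ∀ x ∈ ε, r x ∈ ε) (hYspan : Cspan R Y = univ) (hTDCC : TDCC Y P)
    (hequi : ∃ δ ∈ 𝓝 (0 : M), ∀ t ∈ TS T1, ∀ x ∈ δ, t x ∈ ε)
    (hcompat : ∀ t ∈ TS T1, Compatible R Y P t) : PerE T1 (ε : Set M) = univ :=
  let ⟨_, hδ, hδε⟩ := hequi
  (isOpenRSubgroup_PerE hT1comm hRε hδ hδε).eq_univ hYspan hTDCC fun _ hμ =>
    PerE.mem_of_DSM_subset hcompat hμ

lemma isOpenRSubgroup_UniqZeroE (hper : ∀ a, a ∈ PerE T1 (ε : Set M))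
    (hT1comm : ∀ t ∈ T1, ∀ r ∈ R, ∀ a : M, t (r a) = r (t a))
    (hRε : ∀ r ∈ R, ∀ x ∈ ε, r x ∈ ε) (hδ : δ ∈ 𝓝 0) (hδε : ∀ t ∈ TS T1, ∀ x ∈ δ, t x ∈ ε) :
    IsOpenRSubgroup R (UniqZeroE T1 ε) where
  mem_nhds := mem_of_superset hδ fun _ => UniqZeroE.of_mem hδε
  add_mem _ hx _ hy := UniqZeroE.add_mem hper hx hy
  neg_mem _ hx := UniqZeroE.neg_mem hx
  map_mem _ hr _ hx := UniqZeroE.map_mem hper hT1comm hRε hr hx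

lemma isOpenRSubgroup_UniqE (hper : ∀ a, a ∈ PerE T1 (ε : Set M))
    (hT1comm : ∀ t ∈ T1, ∀ r ∈ R, ∀ a : M, t (r a) = r (t a))
    (hRε : ∀ r ∈ R, ∀ x ∈ ε, r x ∈ ε) (hδ : δ ∈ 𝓝 0) (hδε : ∀ t ∈ TS T1, ∀ x ∈ δ, t x ∈ ε) :
    IsOpenRSubgroup R (UniqE T1 (ε : Set M)) where
  mem_nhds := mem_of_superset (isOpenRSubgroup_UniqZeroE hper hT1comm hRε hδ hδε).mem_nhds
    UniqZeroE.subset_UniqE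
  add_mem _ hx _ hy := UniqE.add_mem hper hx hy
  neg_mem _ hx := UniqE.neg_mem hx
  map_mem _ hr _ hx := UniqE.map_mem hper hT1comm hRε hr hx

lemma UniqE.mem_of_DSM_subset [SeparatelyContinuousAdd M] (hper : ∀ a, a ∈ PerE T1 (ε : Set M))
    (hT1comm : ∀ t ∈ T1, ∀ r ∈ R, ∀ a : M, t (r a) = r (t a))
    (hRε : ∀ r ∈ R, ∀ x ∈ ε, r x ∈ ε) (hδ : δ ∈ 𝓝 0) (hδε : ∀ t ∈ TS T1, ∀ x ∈ δ, t x ∈ ε)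
    (hamb : ∀ μ ∈ Y, ∀ t1 ∈ T1, ∀ t2 ∈ T1, t1 μ ≠ μ → t2 μ ≠ μ →
      t1 μ - t2 μ ∈ DIS R Y P T1 μ)
    (hcompat : ∀ t ∈ TS T1, Compatible R Y P t) (hμ : μ ∈ Y)
    (hD : DSM R Y P μ ⊆ UniqE T1 (ε : Set M)) : μ ∈ UniqE T1 (ε : Set M) := by
  have hDIS : DIS R Y P T1 μ ⊆ UniqZeroE T1 ε :=
    (isOpenRSubgroup_UniqZeroE hper hT1comm hRε hδ hδε).Cspan_subset <| by
      rintro _ ⟨ν, hν, hνμ, s, hs, rfl⟩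
      exact UniqE.sub_apply_mem_UniqZeroE hper (hD (subset_Cspan ⟨hν, hνμ⟩)) (subset_TS hs)
  have hsD : ∀ s ∈ T1, s μ ≠ μ → s μ ∈ UniqE T1 (ε : Set M) :=
    fun s hs hsμ => hD ((hcompat s (subset_TS hs) μ hμ).resolve_left hsμ)
  refine mem_UniqE_iff.2 fun b₁ b₂ h₁ h₂ => ?_
  rcases h₁.stuckMod_or_exists with h₁ | ⟨s₁, hs₁, hs₁μ, h₁⟩
  · exact h₁.sub_mem_of_reducesMod h₂
  rcases h₂.stuckMod_or_exists with h₂ | ⟨s₂, hs₂, hs₂μ, h₂⟩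
  · rw [← neg_mem_iff, neg_sub]
    exact h₂.sub_mem_of_reducesMod (h₁.of_apply (subset_TS hs₁))
  obtain ⟨c₁, c₂, hc₁, hc₂, hc⟩ :=
    exists_sub_mem_of_sub_mem_UniqZeroE hper (hDIS (hamb μ hμ s₁ hs₁ s₂ hs₂ hs₁μ hs₂μ))
  have e₁ := mem_UniqE_iff.1 (hsD s₁ hs₁ hs₁μ) b₁ c₁ h₁ hc₁
  have e₂ := mem_UniqE_iff.1 (hsD s₂ hs₂ hs₂μ) c₂ b₂ hc₂ h₂
  have hsplit : b₁ - b₂ = (b₁ - c₁) + (c₁ - c₂) + (c₂ - b₂) := by abel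
  rw [hsplit]
  exact ε.add_mem (ε.add_mem e₁ hc) e₂

theorem UniqE_eq_univ [SeparatelyContinuousAdd M]
    (hT1comm : ∀ t ∈ T1, ∀ r ∈ R, ∀ a : M, t (r a) = r (t a))
    (hRε : ∀ r ∈ R, ∀ x ∈ ε, r x ∈ ε) (hYspan : Cspan R Y = univ) (hTDCC : TDCC Y P)
    (hamb : ∀ μ ∈ Y, ∀ t1 ∈ T1, ∀ t2 ∈ T1, t1 μ ≠ μ → t2 μ ≠ μ →
      t1 μ - t2 μ ∈ DIS R Y P T1 μ)
    (hequi : ∃ δ ∈ 𝓝 (0 : M), ∀ t ∈ TS T1, ∀ x ∈ δ, t x ∈ ε)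
    (hcompat : ∀ t ∈ TS T1, Compatible R Y P t) : UniqE T1 (ε : Set M) = univ := by
  have hper : ∀ a, a ∈ PerE T1 (ε : Set M) :=
    (PerE_eq_univ hT1comm hRε hYspan hTDCC hequi hcompat).symm ▸ mem_univ
  obtain ⟨δ, hδ, hδε⟩ := hequi
  exact (isOpenRSubgroup_UniqE hper hT1comm hRε hδ hδε).eq_univ hYspan hTDCC fun _ hμ =>
    UniqE.mem_of_DSM_subset hper hT1comm hRε hδ hδε hamb hcompat hμ

end

theorem uniquely_reducible_everywhere_general
    {M : Type*} [AddCommGroup M] [UniformSpace M] [IsUniformAddGroup M]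
    (B : ℕ → AddSubgroup M)
    (hBbasis : (nhds (0 : M)).HasBasis (fun _ : ℕ => True) (fun n => (B n : Set M)))
    (R : Set (AddMonoid.End M))
    (hRsmall : ∀ r ∈ R, ∀ n : ℕ, ∀ a ∈ B n, r a ∈ B n)
    (T1 : Set (AddMonoid.End M))
    (hT1comm : ∀ t ∈ T1, ∀ r ∈ R, ∀ a : M, t (r a) = r (t a))
    (Y : Set M)
    (hYspan : Cspan R Y = (Set.univ : Set M))
    (P : M → M → Prop)
    (hamb : ∀ μ ∈ Y, ∀ t1 ∈ T1, ∀ t2 ∈ T1, t1 μ ≠ μ → t2 μ ≠ μ →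
      t1 μ - t2 μ ∈ DIS R Y P T1 μ)
    (hTDCC : TDCC Y P)
    (hequi : Equicont T1 B)
    (hcompat : ∀ t ∈ TS T1, Compatible R Y P t) :
    Red T1 B = Set.univ := by
  have hRε : ∀ n, ∀ r ∈ R, ∀ x ∈ B n, r x ∈ B n := fun n r hr => hRsmall r hr n
  have hequi' : ∀ n, ∃ δ ∈ 𝓝 (0 : M), ∀ t ∈ TS T1, ∀ x ∈ δ, t x ∈ B n := fun n =>
    let ⟨m, hm⟩ := hequi n
    ⟨B m, hBbasis.mem_of_mem trivial, hm⟩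
  have hper n := PerE_eq_univ hT1comm (hRε n) hYspan hTDCC (hequi' n) hcompat
  have huniq n := UniqE_eq_univ hT1comm (hRε n) hYspan hTDCC hamb (hequi' n) hcompat
  simp only [Red, RedE, Per, hper, huniq, iInter_univ, inter_self]

theorem uniquely_reducible_everywhere
    {M : Type*} [AddCommGroup M] [UniformSpace M] [IsUniformAddGroup M]
    [CompleteSpace M] [T2Space M]
    (B : ℕ → AddSubgroup M)
    (hBopen : ∀ n, IsOpen (B n : Set M))
    (hBanti : ∀ n, (B (n + 1) : Set M) ⊆ (B n : Set M))
    (hBbasis : (nhds (0 : M)).HasBasis (fun _ : ℕ => True) (fun n => (B n : Set M)))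
    (hBsep : ⋂ n, (B n : Set M) = {0})
    (R : Set (AddMonoid.End M))
    (hRcont : ∀ r ∈ R, Continuous r)
    (hRsmall : ∀ r ∈ R, ∀ n : ℕ, ∀ a ∈ B n, r a ∈ B n)
    (T1 : Set (AddMonoid.End M))
    (hT1cont : ∀ t ∈ T1, Continuous t)
    (hT1comm : ∀ t ∈ T1, ∀ r ∈ R, ∀ a : M, t (r a) = r (t a))
    (Y : Set M)
    (hYspan : Cspan R Y = (Set.univ : Set M))
    (P : M → M → Prop)
    (hPirr : ∀ μ, ¬ P μ μ)
    (hPtrans : ∀ μ ν ρ, P μ ν → P ν ρ → P μ ρ)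
    (hamb : ∀ μ ∈ Y, ∀ t1 ∈ T1, ∀ t2 ∈ T1, t1 μ ≠ μ → t2 μ ≠ μ →
      t1 μ - t2 μ ∈ DIS R Y P T1 μ)
    (hTDCC : TDCC Y P)
    (hequi : Equicont T1 B)
    (hcompat : ∀ t ∈ TS T1, Compatible R Y P t) :
    Red T1 B = Set.univ :=
  uniquely_reducible_everywhere_general B hBbasis R hRsmall T1 hT1comm Y hYspan P hamb hTDCC hequi
    hcompat
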